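/- In U_q(sl3), E_1 \hat{F}_3[a] = \hat{F}_3[a+1] E_1 + F_2 (q^{a+1} K_1 K_2 - q^{-a-1} (K_1 K_2)^{-1})/(q - q^{-1}). -/

import Mathlib

/-!
Commuting `E₁` past `F₁F₂` and `F₂F₁` produces, besides the reordered products, the terms
`F₂(qK₁ - q⁻¹K₁')/(q - q⁻¹)` and `F₂(K₁ - K₁')/(q - q⁻¹)`, while commuting it past
`q^b K₂ - q^{-b} K₂'` shifts `b` to `b + 1`. The shifts turn `F̂₃[a]E₁` into `F̂₃[a+1]E₁`; in the
remaining terms the mixed products `K₁K₂'`, `K₁'K₂` cancel and what is left is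
`(q - q⁻¹)` times the stated correction, which absorbs one factor `(q - q⁻¹)⁻¹`.
-/

noncomputable section

/-- The defining relations of `U_q(sl3)` inside an `ℝ`-algebra `R`:
generators `E₁ E₂ F₁ F₂` and `K₁ K₂` with inverses `K₁' K₂'`. -/
structure UqSL3 (R : Type*) [Ring R] [Algebra ℝ R] (q : ℝ)
    (E₁ E₂ F₁ F₂ K₁ K₁' K₂ K₂' : R) : Prop where
  K₁mul : K₁ * K₁' = 1
  K₁mul' : K₁' * K₁ = 1
  K₂mul : K₂ * K₂' = 1
  K₂mul' : K₂' * K₂ = 1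
  Kcomm : K₁ * K₂ = K₂ * K₁
  Kcomm' : K₁ * K₂' = K₂' * K₁
  Kcomm'' : K₁' * K₂ = K₂ * K₁'
  KE11 : K₁ * E₁ = (q ^ (2:ℤ)) • (E₁ * K₁)
  KE12 : K₁ * E₂ = (q ^ (-1:ℤ)) • (E₂ * K₁)
  KE21 : K₂ * E₁ = (q ^ (-1:ℤ)) • (E₁ * K₂)
  KE22 : K₂ * E₂ = (q ^ (2:ℤ)) • (E₂ * K₂)
  KF11 : K₁ * F₁ = (q ^ (-2:ℤ)) • (F₁ * K₁)
  KF12 : K₁ * F₂ = (q ^ (1:ℤ)) • (F₂ * K₁)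
  KF21 : K₂ * F₁ = (q ^ (1:ℤ)) • (F₁ * K₂)
  KF22 : K₂ * F₂ = (q ^ (-2:ℤ)) • (F₂ * K₂)
  EF11 : E₁ * F₁ - F₁ * E₁ = (q - q⁻¹)⁻¹ • (K₁ - K₁')
  EF22 : E₂ * F₂ - F₂ * E₂ = (q - q⁻¹)⁻¹ • (K₂ - K₂')
  EF12 : E₁ * F₂ = F₂ * E₁
  EF21 : E₂ * F₁ = F₁ * E₂
  serreE₁ : E₁ ^ 2 * E₂ - (q + q⁻¹) • (E₁ * E₂ * E₁) + E₂ * E₁ ^ 2 = 0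
  serreE₂ : E₂ ^ 2 * E₁ - (q + q⁻¹) • (E₂ * E₁ * E₂) + E₁ * E₂ ^ 2 = 0
  serreF₁ : F₁ ^ 2 * F₂ - (q + q⁻¹) • (F₁ * F₂ * F₁) + F₂ * F₁ ^ 2 = 0
  serreF₂ : F₂ ^ 2 * F₁ - (q + q⁻¹) • (F₂ * F₁ * F₂) + F₁ * F₂ ^ 2 = 0

/-- `F̂₃[a] = F₁F₂ (q^{a+1}K₂ - q^{-a-1}K₂⁻¹)/(q-q⁻¹) - F₂F₁ (q^a K₂ - q^{-a}K₂⁻¹)/(q-q⁻¹)`. -/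
def hatF₃ {R : Type*} [Ring R] [Algebra ℝ R] (q a : ℝ) (F₁ F₂ K₂ K₂' : R) : R :=
  (q - q⁻¹)⁻¹ • (F₁ * F₂ * (q ^ (a + 1) • K₂ - q ^ (-(a + 1)) • K₂')
    - F₂ * F₁ * (q ^ a • K₂ - q ^ (-a) • K₂'))

theorem mul_eq_smul_mul_of_mul_eq_smul_mul {A : Type*} [Ring A] [Algebra ℝ A] {u v x : A}
    {c : ℝ} (huv : u * v = 1) (hvu : v * u = 1) (h : u * x = c • (x * u)) :
    x * v = c • (v * x) :=
  calc x * v = v * (u * x) * v := by rw [← mul_assoc, hvu, one_mul]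
    _ = c • (v * x * (u * v)) := by simp only [h, mul_smul_comm, smul_mul_assoc, mul_assoc]
    _ = c • (v * x) := by rw [huv, mul_one]

namespace UqSL3

variable {R : Type*} [Ring R] [Algebra ℝ R] {q : ℝ} {E₁ E₂ F₁ F₂ K₁ K₁' K₂ K₂' : R}
  (h : UqSL3 R q E₁ E₂ F₁ F₂ K₁ K₁' K₂ K₂')
include h

theorem K₂'_mul_K₁' : K₂' * K₁' = K₁' * K₂' := by
  simpa using
    mul_eq_smul_mul_of_mul_eq_smul_mul h.K₁mul h.K₁mul' (c := 1) (by simpa using h.Kcomm')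

theorem E₁_mul_K₂ (hq : q ≠ 0) : E₁ * K₂ = q • (K₂ * E₁) := by
  rw [h.KE21, smul_smul, zpow_neg_one, mul_inv_cancel₀ hq, one_smul]

theorem E₁_mul_K₂' : E₁ * K₂' = q⁻¹ • (K₂' * E₁) :=
  mul_eq_smul_mul_of_mul_eq_smul_mul h.K₂mul h.K₂mul' (by rw [h.KE21, zpow_neg_one])

theorem K₁'_mul_F₂ (hq : q ≠ 0) : K₁' * F₂ = q⁻¹ • (F₂ * K₁') := by
  rw [eq_inv_smul_iff₀ hq]
  exact (mul_eq_smul_mul_of_mul_eq_smul_mul h.K₁mul h.K₁mul' (by rw [h.KF12, zpow_one])).symm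

theorem E₁_mul_F₁ : E₁ * F₁ = F₁ * E₁ + (q - q⁻¹)⁻¹ • (K₁ - K₁') := by
  rw [← h.EF11, add_sub_cancel]

theorem E₁_mul_F₁_mul_F₂ (hq : q ≠ 0) :
    E₁ * F₁ * F₂ = F₁ * F₂ * E₁ + (q - q⁻¹)⁻¹ • (F₂ * (q • K₁ - q⁻¹ • K₁')) := by
  rw [h.E₁_mul_F₁, add_mul, mul_assoc, h.EF12, smul_mul_assoc, sub_mul, h.KF12, zpow_one,
    h.K₁'_mul_F₂ hq, mul_sub, mul_smul_comm, mul_smul_comm, mul_assoc]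

theorem E₁_mul_F₂_mul_F₁ :
    E₁ * F₂ * F₁ = F₂ * F₁ * E₁ + (q - q⁻¹)⁻¹ • (F₂ * (K₁ - K₁')) := by
  rw [h.EF12, mul_assoc, h.E₁_mul_F₁, mul_add, mul_smul_comm, mul_assoc]

theorem E₁_mul_rpow_smul_K₂_sub (hq : q ≠ 0) (b : ℝ) :
    E₁ * (q ^ b • K₂ - q ^ (-b) • K₂') = (q ^ (b + 1) • K₂ - q ^ (-(b + 1)) • K₂') * E₁ := by
  rw [mul_sub, mul_smul_comm, mul_smul_comm, h.E₁_mul_K₂ hq, h.E₁_mul_K₂', smul_smul, smul_smul,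
    neg_add', Real.rpow_add_one hq, Real.rpow_sub_one hq, div_eq_mul_inv, sub_mul,
    smul_mul_assoc, smul_mul_assoc]

end UqSL3

theorem smul_K_sub_mul_rpow_smul_K_sub_cancel {A : Type*} [Ring A] [Algebra ℝ A] {q : ℝ}
    (hq : q ≠ 0) (K₁ K₁' K₂ K₂' : A) (a : ℝ) :
    (q • K₁ - q⁻¹ • K₁') * (q ^ (a + 1) • K₂ - q ^ (-(a + 1)) • K₂')
        - (K₁ - K₁') * (q ^ a • K₂ - q ^ (-a) • K₂')
      = (q - q⁻¹) • (q ^ (a + 1) • (K₁ * K₂) - q ^ (-(a + 1)) • (K₁' * K₂')) := by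
  rw [neg_add', Real.rpow_add_one hq, Real.rpow_sub_one hq]
  simp only [mul_sub, sub_mul, smul_mul_assoc, mul_smul_comm, smul_smul, smul_sub]
  match_scalars <;> field_simp <;> ring

theorem stmt_general {R : Type*} [Ring R] [Algebra ℝ R] (q : ℝ) (hq0 : 0 < q)
    (E₁ E₂ F₁ F₂ K₁ K₁' K₂ K₂' : R)
    (h : UqSL3 R q E₁ E₂ F₁ F₂ K₁ K₁' K₂ K₂') (a : ℝ) :
    E₁ * hatF₃ q a F₁ F₂ K₂ K₂'
      = hatF₃ q (a + 1) F₁ F₂ K₂ K₂' * E₁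
        + (q - q⁻¹)⁻¹ • (F₂ * (q ^ (a + 1) • (K₁ * K₂) - q ^ (-(a + 1)) • (K₂' * K₁'))) := by
  have hq : q ≠ 0 := hq0.ne'
  have hc : (q - q⁻¹)⁻¹ * (q - q⁻¹)⁻¹ * (q - q⁻¹) = (q - q⁻¹)⁻¹ := by
    simpa using mul_self_mul_inv (q - q⁻¹)⁻¹
  calc E₁ * hatF₃ q a F₁ F₂ K₂ K₂'
      = (q - q⁻¹)⁻¹ • (E₁ * F₁ * F₂ * (q ^ (a + 1) • K₂ - q ^ (-(a + 1)) • K₂')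
          - E₁ * F₂ * F₁ * (q ^ a • K₂ - q ^ (-a) • K₂')) := by
        simp only [hatF₃, mul_smul_comm, mul_sub, mul_assoc]
    _ = (q - q⁻¹)⁻¹ • (F₁ * F₂ * (E₁ * (q ^ (a + 1) • K₂ - q ^ (-(a + 1)) • K₂'))
          - F₂ * F₁ * (E₁ * (q ^ a • K₂ - q ^ (-a) • K₂')))
        + ((q - q⁻¹)⁻¹ * (q - q⁻¹)⁻¹) •
          (F₂ * ((q • K₁ - q⁻¹ • K₁') * (q ^ (a + 1) • K₂ - q ^ (-(a + 1)) • K₂')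
            - (K₁ - K₁') * (q ^ a • K₂ - q ^ (-a) • K₂'))) := by
        rw [h.E₁_mul_F₁_mul_F₂ hq, h.E₁_mul_F₂_mul_F₁]
        simp only [add_mul, sub_mul, mul_sub, smul_add, smul_sub, smul_mul_assoc, mul_smul_comm,
          mul_assoc, smul_smul]
        module
    _ = _ := by
        rw [h.E₁_mul_rpow_smul_K₂_sub hq, h.E₁_mul_rpow_smul_K₂_sub hq,
          smul_K_sub_mul_rpow_smul_K_sub_cancel hq, h.K₂'_mul_K₁', mul_smul_comm, smul_smul, hc]
        simp only [hatF₃, smul_mul_assoc, sub_mul, mul_sub, mul_assoc]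

theorem stmt {R : Type*} [Ring R] [Algebra ℝ R] (q : ℝ) (hq0 : 0 < q) (hq1 : q < 1)
    (E₁ E₂ F₁ F₂ K₁ K₁' K₂ K₂' : R)
    (h : UqSL3 R q E₁ E₂ F₁ F₂ K₁ K₁' K₂ K₂') (a : ℝ) :
    E₁ * hatF₃ q a F₁ F₂ K₂ K₂'
      = hatF₃ q (a + 1) F₁ F₂ K₂ K₂' * E₁
        + (q - q⁻¹)⁻¹ • (F₂ * (q ^ (a + 1) • (K₁ * K₂) - q ^ (-(a + 1)) • (K₂' * K₁'))) :=
  stmt_general q hq0 E₁ E₂ F₁ F₂ K₁ K₁' K₂ K₂' h a
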